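/- Let x_1,…,x_n ∈ ℝ^{d+1} each have norm √(d+1), with no two parallel, and define H ∈ ℝ^{n×n} by H_{ij} = x_i^T x_j · (π − arccos(x_i^T x_j/(d+1)))/(2π). Then H is symmetric positive definite. -/

import Mathlib

/-!
With `t = ⟪xᵢ, xⱼ⟫ / (d + 1)` and `π - arccos t = π / 2 + arcsin t`, the matrix `H` is a positive
multiple of `(π / 2) G + (t arcsin t)ᵢⱼ`, where `G` is the Gram matrix of the normalised points. The
Maclaurin series `t arcsin t = ∑ cₖ t ^ (2k + 2)` has positive coefficients and converges on
`[-1, 1]`, so the second matrix is a positive combination of Hadamard powers of `G`, each positive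
semidefinite by the Schur product theorem. As `G` has unit diagonal and, by the strict
Cauchy–Schwarz inequality for non-parallel points, off-diagonal entries of modulus `< 1`, its
Hadamard powers tend to the identity; hence for every `v ≠ 0` some term of the series contributes
strictly positively to `vᵀ H v`.
-/

open Real Filter Topology Matrix
open scoped ComplexOrder

namespace Matrix

variable {ι : Type*}

theorem PosSemidef.map_pow [Finite ι] {𝕜 : Type*} [RCLike 𝕜] {A : Matrix ι ι 𝕜}
    (hA : A.PosSemidef) (k : ℕ) : (A.map (· ^ k)).PosSemidef := by
  induction k with
  | zero =>
    convert posSemidef_vecMulVec_self_star (1 : ι → 𝕜) using 1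
    ext i j
    simp [vecMulVec]
  | succ k ih =>
    convert ih.hadamard hA using 1
    ext i j
    simp [pow_succ]

theorem hasSum_star_dotProduct_mulVec [Fintype ι] {R : Type*} [CommRing R] [StarRing R]
    [TopologicalSpace R] [IsTopologicalRing R] {A : ℕ → Matrix ι ι R} {M : Matrix ι ι R}
    (hA : ∀ i j, HasSum (fun k => A k i j) (M i j)) (v : ι → R) :
    HasSum (fun k => star v ⬝ᵥ A k *ᵥ v) (star v ⬝ᵥ M *ᵥ v) := by
  simp only [dotProduct, mulVec]
  exact hasSum_sum fun i _ => (hasSum_sum fun j _ => (hA i j).mul_right (v j)).mul_left _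

theorem posDef_of_hasSum_map_pow [Fintype ι] {G M : Matrix ι ι ℝ} (hG : G.PosSemidef)
    (hdiag : ∀ i, G i i = 1) (hoff : Pairwise fun i j => |G i j| < 1) {a : ℕ → ℝ} {m : ℕ → ℕ}
    (ha : ∀ k, 0 ≤ a k) (hapos : ∃ᶠ k in atTop, 0 < a k) (hm : Tendsto m atTop atTop)
    (hM : ∀ i j, HasSum (fun k => a k * G i j ^ m k) (M i j)) : M.PosDef := by
  classical
  refine .of_dotProduct_mulVec_pos (.ext fun i j => ?_) fun v hv => ?_
  · have hG_symm : G j i = G i j := by simpa using hG.isHermitian.apply i j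
    refine (star_trivial _).trans <| (hM j i).unique ?_
    simpa only [hG_symm] using hM i j
  have hpow : Tendsto (fun k => G.map (· ^ m k)) atTop (𝓝 1) := by
    refine tendsto_pi_nhds.2 fun i => tendsto_pi_nhds.2 fun j => ?_
    rcases eq_or_ne i j with rfl | hij
    · simp [hdiag]
    · rw [one_apply_ne hij]
      exact (tendsto_pow_atTop_nhds_zero_of_abs_lt_one (hoff hij)).comp hm
  set q : Matrix ι ι ℝ → ℝ := fun A => star v ⬝ᵥ A *ᵥ v
  have hsum : HasSum (fun k => a k * q (G.map (· ^ m k))) (q M) := by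
    simpa [q, smul_mulVec, dotProduct_smul] using
      hasSum_star_dotProduct_mulVec (A := fun k => a k • G.map (· ^ m k)) hM v
  have hlim : Tendsto (fun k => q (G.map (· ^ m k))) atTop (𝓝 (q 1)) :=
    ((continuous_const.dotProduct (continuous_id.matrix_mulVec continuous_const)).tendsto 1).comp
      hpow
  have hq_one : 0 < q 1 := by simpa [q] using dotProduct_star_self_pos_iff.2 hv
  obtain ⟨K, haK, hqK⟩ := (hapos.and_eventually (hlim.eventually_const_lt hq_one)).exists
  exact (mul_pos haK hqK).trans_le <| le_hasSum hsum K fun k _ =>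
    mul_nonneg (ha k) ((hG.map_pow _).dotProduct_mulVec_nonneg v)

end Matrix

theorem Ring.multichoose_pos {r : ℝ} (hr : 0 < r) (n : ℕ) : 0 < Ring.multichoose r n := by
  have h := Ring.factorial_nsmul_multichoose_eq_ascPochhammer r n
  rw [Polynomial.ascPochhammer_smeval_eq_eval, nsmul_eq_mul] at h
  have := ascPochhammer_pos n r hr
  rw [← h] at this
  exact pos_of_mul_pos_right this (by positivity)

namespace Real

theorem hasSum_multichoose_mul_pow (a : ℝ) {s : ℝ} (hs : |s| < 1) :
    HasSum (fun n => Ring.multichoose a n * s ^ n) (1 / (1 - s) ^ a) := by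
  have := (one_div_one_sub_rpow_hasFPowerSeriesOnBall_zero a).hasSum (y := s)
    (by simpa [enorm_eq_nnnorm, ← NNReal.coe_lt_one] using hs)
  simpa [FormalMultilinearSeries.ofScalars_apply_eq, Ring.multichoose_eq, mul_comm] using this

/-- `Ring.multichoose (1 / 2) n = (2n choose n) / 4 ^ n` is the coefficient of `s ^ n` in
`(1 - s) ^ (-1 / 2)`, so integrating `arcsin' y = (1 - y ^ 2) ^ (-1 / 2)` termwise divides it
by `2 * n + 1`. -/
noncomputable def arcsinCoeff (n : ℕ) : ℝ := Ring.multichoose (1 / 2 : ℝ) n / (2 * n + 1)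

theorem arcsinCoeff_pos (n : ℕ) : 0 < arcsinCoeff n :=
  div_pos (Ring.multichoose_pos (by norm_num) n) (by positivity)

theorem hasDerivAt_arcsinCoeff_mul_pow (n : ℕ) (z : ℝ) :
    HasDerivAt (fun y => arcsinCoeff n * y ^ (2 * n + 1))
      (Ring.multichoose (1 / 2 : ℝ) n * (z ^ 2) ^ n) z := by
  refine ((hasDerivAt_pow (2 * n + 1) z).const_mul (arcsinCoeff n)).congr_deriv ?_
  rw [← pow_mul, Nat.add_sub_cancel, arcsinCoeff]
  push_cast
  field_simp

theorem hasSum_arcsin {y : ℝ} (hy : |y| < 1) :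
    HasSum (fun n => arcsinCoeff n * y ^ (2 * n + 1)) (arcsin y) := by
  obtain ⟨r, hyr, hr1⟩ := exists_between hy
  have hr0 : 0 < r := (abs_nonneg y).trans_lt hyr
  set U := Set.Ioo (-r) r
  have hsq : ∀ z ∈ U, |z ^ 2| ≤ r ^ 2 := fun z hz => by
    rw [abs_of_nonneg (sq_nonneg z)]
    exact sq_le_sq' hz.1.le hz.2.le
  have hr : |r ^ 2| < 1 := by rw [abs_of_pos (by positivity)]; nlinarith
  have hbound : ∀ n, ∀ z ∈ U, ‖Ring.multichoose (1 / 2 : ℝ) n * (z ^ 2) ^ n‖ ≤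
      Ring.multichoose (1 / 2 : ℝ) n * (r ^ 2) ^ n := fun n z hz => by
    have hpos := Ring.multichoose_pos (r := 1 / 2) (by norm_num) n
    rw [norm_mul, norm_pow, norm_of_nonneg hpos.le, norm_eq_abs]
    gcongr
    exact hsq z hz
  have hsummable := (hasSum_multichoose_mul_pow (1 / 2) hr).summable
  have hzero : (0 : ℝ) ∈ U := ⟨neg_lt_zero.2 hr0, hr0⟩
  -- Both sides have derivative `1 / √(1 - z ^ 2)` on `U` and vanish at `0`.
  have hderiv : ∀ z ∈ U, HasDerivAt (fun z => ∑' n, arcsinCoeff n * z ^ (2 * n + 1))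
      (1 / √(1 - z ^ 2)) z := fun z hz => by
    have := hasDerivAt_tsum_of_isPreconnected hsummable isOpen_Ioo isPreconnected_Ioo
      (fun n z _ => hasDerivAt_arcsinCoeff_mul_pow n z) hbound hzero (by simp) hz
    rwa [(hasSum_multichoose_mul_pow (1 / 2) ((hsq z hz).trans_lt (by simpa using hr))).tsum_eq,
      ← sqrt_eq_rpow] at this
  have heq : Set.EqOn (fun z => ∑' n, arcsinCoeff n * z ^ (2 * n + 1)) arcsin U :=
    isOpen_Ioo.eqOn_of_deriv_eq isPreconnected_Ioo
      (fun z hz => (hderiv z hz).differentiableAt.differentiableWithinAt)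
      (fun z hz => (differentiableAt_arcsin.2
        ⟨by linarith [hz.1], by linarith [hz.2]⟩).differentiableWithinAt)
      (fun z hz => by rw [(hderiv z hz).deriv, deriv_arcsin]) hzero (by simp)
  have hyU : y ∈ U := abs_lt.1 hyr
  rw [← heq hyU]
  exact (summable_of_summable_hasDerivAt_of_isPreconnected hsummable isOpen_Ioo isPreconnected_Ioo
    (fun n z _ => hasDerivAt_arcsinCoeff_mul_pow n z) hbound hzero (by simp) hyU).hasSum

theorem hasSum_arcsinCoeff : HasSum arcsinCoeff (π / 2) := by
  have hc := fun n => (arcsinCoeff_pos n).le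
  have hleft : ∀ᶠ y in 𝓝[<] (1 : ℝ), y ∈ Set.Ioo 0 1 := Ioo_mem_nhdsLT zero_lt_one
  have hpartial : ∀ N, ∑ n ∈ Finset.range N, arcsinCoeff n ≤ π / 2 := fun N => by
    have hp : Continuous fun y : ℝ => ∑ n ∈ Finset.range N, arcsinCoeff n * y ^ (2 * n + 1) := by
      fun_prop
    refine le_of_tendsto
      (by simpa using (hp.tendsto 1).mono_left (nhdsWithin_le_nhds (s := Set.Iio 1))) ?_
    filter_upwards [hleft] with y hy
    have hy1 : |y| < 1 := by rw [abs_of_pos hy.1]; exact hy.2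
    refine (sum_le_hasSum _ (fun n _ => ?_) (hasSum_arcsin hy1)).trans (arcsin_le_pi_div_two y)
    exact mul_nonneg (hc n) (pow_nonneg hy.1.le _)
  have hsummable : Summable arcsinCoeff := summable_of_sum_range_le hc hpartial
  refine hsummable.hasSum_iff.2 (le_antisymm (tsum_le_of_sum_range_le hc hpartial) ?_)
  have harcsin : Tendsto arcsin (𝓝[<] 1) (𝓝 (π / 2)) := by
    simpa using (continuous_arcsin.tendsto 1).mono_left (nhdsWithin_le_nhds (s := Set.Iio 1))
  refine le_of_tendsto harcsin ?_
  filter_upwards [hleft] with y hy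
  have hy1 : |y| < 1 := by rw [abs_of_pos hy.1]; exact hy.2
  rw [← (hasSum_arcsin hy1).tsum_eq]
  refine (hasSum_arcsin hy1).summable.tsum_le_tsum (fun n => ?_) hsummable
  exact mul_le_of_le_one_right (hc n) (pow_le_one₀ hy.1.le hy.2.le)

theorem hasSum_mul_arcsin {t : ℝ} (ht : |t| ≤ 1) :
    HasSum (fun n => arcsinCoeff n * t ^ (2 * n + 2)) (t * arcsin t) := by
  rcases ht.lt_or_eq with ht | ht
  · have h := (hasSum_arcsin ht).mul_left t
    rwa [show (fun n => t * (arcsinCoeff n * t ^ (2 * n + 1))) =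
      fun n => arcsinCoeff n * t ^ (2 * n + 2) from funext fun n => by ring] at h
  · rcases abs_eq zero_le_one |>.1 ht with rfl | rfl
    · simpa using hasSum_arcsinCoeff
    · have hpow (n : ℕ) : (-1 : ℝ) ^ (2 * n + 2) = 1 := Even.neg_one_pow ⟨n + 1, by ring⟩
      simpa [hpow] using hasSum_arcsinCoeff

end Real

theorem abs_real_inner_lt_norm_mul_norm {F : Type*} [NormedAddCommGroup F]
    [InnerProductSpace ℝ F] {x y : F} (hy : y ≠ 0) (h : ∀ t : ℝ, x ≠ t • y) :
    |inner ℝ x y| < ‖x‖ * ‖y‖ := by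
  refine (abs_real_inner_le_norm x y).lt_of_ne fun heq => ?_
  have := ((norm_inner_eq_norm_tfae ℝ y x).out 0 2).1 (by
    rwa [real_inner_comm, norm_eq_abs, mul_comm])
  rcases this with hy0 | ⟨t, rfl⟩
  exacts [hy hy0, h t rfl]

theorem pairwise_abs_inner_div_lt_one {ι F : Type*} [NormedAddCommGroup F]
    [InnerProductSpace ℝ F] {x : ι → F} {c : ℝ} (hnorm : ∀ i, ‖x i‖ ^ 2 = c)
    (hpar : ∀ i j, i ≠ j → ∀ t : ℝ, x i ≠ t • x j) :
    Pairwise fun i j => |inner ℝ (x i) (x j) / c| < 1 := fun i j hij => by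
  have hj : x j ≠ 0 := by simpa using hpar j i hij.symm 0
  have hc : 0 < c := hnorm j ▸ by positivity
  have hnorm_eq : ‖x i‖ = ‖x j‖ := by
    rw [← sq_eq_sq₀ (norm_nonneg _) (norm_nonneg _), hnorm, hnorm]
  have := abs_real_inner_lt_norm_mul_norm hj (hpar i j hij)
  rw [← hnorm_eq, ← sq, hnorm] at this
  dsimp only
  rwa [abs_div, abs_of_pos hc, div_lt_one hc]

theorem ntk_gram_posDef (d n : ℕ)
    (x : Fin n → EuclideanSpace ℝ (Fin (d + 1)))
    (hnorm : ∀ i, ‖x i‖ = Real.sqrt ((d : ℝ) + 1))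
    (hpar : ∀ i j, i ≠ j → ∀ t : ℝ, x i ≠ t • x j)
    (H : Matrix (Fin n) (Fin n) ℝ)
    (hH : ∀ i j, H i j = (inner ℝ (x i) (x j) : ℝ) *
        (Real.pi - Real.arccos ((inner ℝ (x i) (x j) : ℝ) / ((d : ℝ) + 1))) / (2 * Real.pi)) :
    H.PosDef := by
  have hd : (0 : ℝ) < d + 1 := by positivity
  have hnorm_sq : ∀ i, ‖x i‖ ^ 2 = d + 1 := fun i => by rw [hnorm, sq_sqrt hd.le]
  set G : Matrix (Fin n) (Fin n) ℝ := ((d : ℝ) + 1)⁻¹ • gram ℝ x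
  have hG_apply : ∀ i j, G i j = inner ℝ (x i) (x j) / (d + 1) := fun i j => by
    simp [G, gram_apply, div_eq_inv_mul]
  have hG : G.PosSemidef := (posSemidef_gram ℝ x).smul (by positivity)
  have hdiag : ∀ i, G i i = 1 := fun i => by
    rw [hG_apply, real_inner_self_eq_norm_sq, hnorm_sq, div_self hd.ne']
  have hoff : Pairwise fun i j => |G i j| < 1 := fun i j hij => by
    simpa only [hG_apply] using pairwise_abs_inner_div_lt_one hnorm_sq hpar hij
  have hle : ∀ i j, |G i j| ≤ 1 := fun i j => by
    rcases eq_or_ne i j with rfl | hij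
    exacts [by simp [hdiag], (hoff hij).le]
  have hM : (G.map fun t => t * arcsin t).PosDef :=
    posDef_of_hasSum_map_pow hG hdiag hoff (fun k => (arcsinCoeff_pos k).le)
      (.of_forall arcsinCoeff_pos) (tendsto_atTop_mono (fun k => show k ≤ 2 * k + 2 by omega)
        tendsto_id) fun i j => hasSum_mul_arcsin (hle i j)
  have hH_eq : H = ((d + 1) / (2 * π)) • ((π / 2) • G + G.map fun t => t * arcsin t) := by
    ext i j
    rw [hH, Matrix.smul_apply, Matrix.add_apply, Matrix.smul_apply, map_apply, hG_apply,
      arccos_eq_pi_div_two_sub_arcsin, smul_eq_mul, smul_eq_mul]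
    field_simp
    ring
  rw [hH_eq]
  exact (PosDef.posSemidef_add (hG.smul (by positivity)) hM).smul (by positivity)
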